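/- Let P ⊆ ℝ^d be finite, Y ⊆ ℝ^d convex, and φ₀, φ₁ : P → ℝ. Set φ_t := (1-t)φ₀ + tφ₁ for t ∈ [0,1]. Then for every p ∈ P, the Laguerre cell of φ_t satisfies the Minkowski-sum inclusion: Lag_P^{φ_t}(p) ∩ Y ⊇ (1-t)(Lag_P^{φ₀}(p) ∩ Y) + t(Lag_P^{φ₁}(p) ∩ Y). -/
import Mathlib


open scoped RealInnerProductSpace Pointwise

/-- The Laguerre cell of a point `p` for the function `φ` on the finite set `P`. -/
def Lag {d : ℕ} (P : Finset (EuclideanSpace ℝ (Fin d)))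
    (φ : EuclideanSpace ℝ (Fin d) → ℝ) (p : EuclideanSpace ℝ (Fin d)) :
    Set (EuclideanSpace ℝ (Fin d)) :=
  {y | ∀ q ∈ P, φ p + ⟪q - p, y⟫ ≤ φ q}

/-- Minkowski-sum inclusion of trimmed Laguerre cells along a linear interpolation. -/
theorem Lag_minkowski_inclusion {d : ℕ} (P : Finset (EuclideanSpace ℝ (Fin d)))
    (Y : Set (EuclideanSpace ℝ (Fin d))) (hYc : Convex ℝ Y)
    (φ₀ φ₁ : EuclideanSpace ℝ (Fin d) → ℝ)
    {t : ℝ} (ht : t ∈ Set.Icc (0:ℝ) 1)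
    {p : EuclideanSpace ℝ (Fin d)} (hp : p ∈ P) :
    (1 - t) • (Lag P φ₀ p ∩ Y) + t • (Lag P φ₁ p ∩ Y) ⊆
      Lag P (fun x => (1 - t) * φ₀ x + t * φ₁ x) p ∩ Y := by
  rintro z ⟨a, ⟨y0, ⟨h0, hy0⟩, rfl⟩, b, ⟨y1, ⟨h1, hy1⟩, rfl⟩, rfl⟩
  obtain ⟨ht0, ht1⟩ := ht
  constructor
  · intro q hq
    have h0q := h0 q hq
    have h1q := h1 q hq
    have := add_le_add (mul_le_mul_of_nonneg_left h0q (sub_nonneg.2 ht1))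
      (mul_le_mul_of_nonneg_left h1q ht0)
    simp only [inner_smul_right, inner_add_right]
    nlinarith [this]
  · exact hYc hy0 hy1 (by linarith) ht0 (by ring)
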